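/- In Max-Welter, for any k ≥ 2 and any fixed a_1 < a_2 < ... < a_k, there exists a positive integer n ≤ a_k such that for all i ≥ 0, the Sprague-Grundy value of (a_1, ..., a_{k-1}, a_k + n + i) equals a_k + i. -/

import Mathlib

/-- A move in Max-Welter: the coin on the largest occupied square moves to an
empty square strictly to its left. -/
def MWMove (s t : Finset ℕ) : Prop :=
  ∃ (hs : s.Nonempty) (j : ℕ), j < s.max' hs ∧ j ∉ s ∧
    t = insert j (s.erase (s.max' hs))

theorem MWMove.sum_lt {s t : Finset ℕ} (h : MWMove s t) :
    t.sum id < s.sum id := by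
  obtain ⟨hs, j, hj, hjs, rfl⟩ := h
  have hm : s.max' hs ∈ s := s.max'_mem hs
  have hje : j ∉ s.erase (s.max' hs) := fun hc => hjs (Finset.mem_of_mem_erase hc)
  have h2 : (s.erase (s.max' hs)).sum id + s.max' hs = s.sum id :=
    Finset.sum_erase_add s id hm
  rw [Finset.sum_insert hje]
  simp only [id] at *
  omega

/-- Normal-play Sprague-Grundy value of a Max-Welter position. -/
noncomputable def grundy (s : Finset ℕ) : ℕ :=
  sInf {n : ℕ | ∀ t, ∀ _h : MWMove s t, grundy t ≠ n}
termination_by s.sum id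
decreasing_by exact _h.sum_lt

open Classical in
/-- Misère Sprague-Grundy value: terminal positions get value 1. -/
noncomputable def mgrundy (s : Finset ℕ) : ℕ :=
  if ∀ t, ¬ MWMove s t then 1
  else sInf {n : ℕ | ∀ t, ∀ _h : MWMove s t, mgrundy t ≠ n}
termination_by s.sum id
decreasing_by exact _h.sum_lt

/-- Normal play: `s` is a P-position iff every move leads to a non-P-position. -/
def MWPPos (s : Finset ℕ) : Prop :=
  ∀ t, ∀ _h : MWMove s t, ¬ MWPPos t
termination_by s.sum id
decreasing_by exact _h.sum_lt

/-- Misère play: the player to move wins iff there is no move (the opponent made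
the last move and loses), or some move leads to a position losing for the opponent. -/
def MWMisereWin (s : Finset ℕ) : Prop :=
  (∀ t, ¬ MWMove s t) ∨ ∃ t, ∃ _h : MWMove s t, ¬ MWMisereWin t
termination_by s.sum id
decreasing_by exact _h.sum_lt

/-!
Let `B` be the coins other than the last one and `M = max B`. A position whose last coin sits
on a free square `x ≤ M` has at most `M - 1` options, so its Grundy value is below `M`; call the
set of these values `T ⊆ range M`. Beyond `M` the last coin can reach every free square, so the
Grundy values `g (M + 1), g (M + 2), …` of the positions `B ∪ {m}` are produced by repeatedly
adjoining the mex: `g m = mex (T ∪ {g (M + 1), …, g (m - 1)})`. Each step adds one new element,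
and once the set has at least `M` elements it is an initial segment of `ℕ`, after which
`g m` increases by one at every step.
-/

open Finset

noncomputable def mex (s : Finset ℕ) : ℕ := sInf (s : Set ℕ)ᶜ

lemma mex_notMem (s : Finset ℕ) : mex s ∉ s :=
  Nat.sInf_mem s.finite_toSet.infinite_compl.nonempty

lemma mem_of_lt_mex {s : Finset ℕ} {v : ℕ} (hv : v < mex s) : v ∈ s := by
  by_contra h
  exact (Nat.sInf_le h).not_gt hv

lemma mex_le_card (s : Finset ℕ) : mex s ≤ #s := by
  simpa using card_le_card fun v hv => mem_of_lt_mex (mem_range.1 hv)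

lemma mex_range (N : ℕ) : mex (range N) = N :=
  le_antisymm (Nat.sInf_le (by simp)) (by simpa using mex_notMem (range N))

noncomputable def insertMex (s : Finset ℕ) : Finset ℕ := insert (mex s) s

lemma card_iterate_insertMex (s : Finset ℕ) (j : ℕ) : #(insertMex^[j] s) = #s + j := by
  induction j with
  | zero => rfl
  | succ j ih =>
    rw [Function.iterate_succ_apply', insertMex, card_insert_of_notMem (mex_notMem _), ih]
    rfl

lemma iterate_insertMex_subset_range {s : Finset ℕ} {N : ℕ} (h : s ⊆ range N) (j : ℕ) :
    insertMex^[j] s ⊆ range (max N (#s + j)) := by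
  induction j with
  | zero => exact h.trans (range_subset_range.2 (le_max_left _ _))
  | succ j ih =>
    rw [Function.iterate_succ_apply', insertMex, insert_subset_iff]
    constructor
    · have := mex_le_card (insertMex^[j] s)
      rw [card_iterate_insertMex] at this
      simp only [mem_range]
      omega
    · exact ih.trans (range_subset_range.2 (by omega))

lemma iterate_insertMex_eq_range {s : Finset ℕ} {N j : ℕ} (h : s ⊆ range N)
    (hj : N ≤ #s + j) : insertMex^[j] s = range (#s + j) := by
  refine eq_of_subset_of_card_le ?_ (by rw [card_range, card_iterate_insertMex])
  simpa [max_eq_right hj] using iterate_insertMex_subset_range h j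

lemma grundy_eq_mex {s : Finset ℕ} (hs : s.Nonempty) :
    grundy s = mex (((range (s.max' hs)).filter (· ∉ s)).image
      fun x => grundy (insert x (s.erase (s.max' hs)))) := by
  rw [grundy, mex]
  congr 1
  ext n
  simp only [Set.mem_ofPred_eq, coe_image, coe_filter, Set.mem_compl_iff, Set.mem_image,
    mem_range, not_exists, not_and]
  constructor
  · intro h x hx
    exact h _ ⟨hs, x, hx.1, hx.2, rfl⟩
  · rintro h t ⟨hs', x, hx, hxs, rfl⟩
    exact h x ⟨hx, hxs⟩

/-- A position has at most `max s + 1 - #s` options, and the mex is bounded by their number. -/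
lemma grundy_add_card_le {s : Finset ℕ} (hs : s.Nonempty) : grundy s + #s ≤ s.max' hs + 1 := by
  have hsub : s ⊆ range (s.max' hs + 1) := fun x hx =>
    mem_range.2 (Nat.lt_succ_of_le (s.le_max' x hx))
  have hoptions : (range (s.max' hs)).filter (· ∉ s) ⊆ range (s.max' hs + 1) \ s := by
    intro x hx
    simp only [mem_filter, mem_range] at hx
    exact mem_sdiff.2 ⟨mem_range.2 (by omega), hx.2⟩
  have hcard := card_le_card hoptions
  rw [card_sdiff_of_subset hsub, card_range] at hcard
  have hs_card := card_le_card hsub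
  rw [card_range] at hs_card
  have hgrundy : grundy s ≤ s.max' hs + 1 - #s := by
    rw [grundy_eq_mex hs]
    exact (mex_le_card _).trans (card_image_le.trans hcard)
  omega

noncomputable def grundyValuesBelow (B : Finset ℕ) (m : ℕ) : Finset ℕ :=
  ((range m).filter (· ∉ B)).image fun x => grundy (insert x B)

section LastCoin

variable {B : Finset ℕ} {M : ℕ}

lemma grundy_insert_eq_mex {m : ℕ} (hm : ∀ b ∈ B, b < m) :
    grundy (insert m B) = mex (grundyValuesBelow B m) := by
  have hne : (insert m B).Nonempty := insert_nonempty m B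
  have hmax : (insert m B).max' hne = m :=
    le_antisymm (max'_le _ _ _ fun y hy => (mem_insert.1 hy).elim le_of_eq fun hy => (hm y hy).le)
      (le_max' _ _ (mem_insert_self m B))
  have hmB : m ∉ B := fun h => (hm m h).false
  rw [grundy_eq_mex hne, hmax, erase_insert hmB, grundyValuesBelow]
  congr 2
  refine filter_congr fun x hx => ?_
  simp only [mem_insert, not_or, and_iff_right (mem_range.1 hx).ne]

lemma grundyValuesBelow_succ {m : ℕ} (hm : m ∉ B) :
    grundyValuesBelow B (m + 1) = insert (grundy (insert m B)) (grundyValuesBelow B m) := by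
  rw [grundyValuesBelow, range_add_one, filter_insert, if_pos hm, image_insert]
  rfl

lemma grundyValuesBelow_add (hB : IsGreatest (B : Set ℕ) M) (d : ℕ) :
    grundyValuesBelow B (M + 1 + d) = insertMex^[d] (grundyValuesBelow B (M + 1)) := by
  induction d with
  | zero => rfl
  | succ d ih =>
    have hlt : ∀ b ∈ B, b < M + 1 + d := fun b hb => by have := hB.2 hb; omega
    rw [← add_assoc, grundyValuesBelow_succ fun h => (hlt _ h).false,
      grundy_insert_eq_mex hlt, ih, Function.iterate_succ_apply']
    rfl

/-- A free square `x ≤ M` lies strictly below `M`, so `B ∪ {x}` has at least two coins and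
maximum `M`. -/
lemma grundyValuesBelow_subset_range (hB : IsGreatest (B : Set ℕ) M) :
    grundyValuesBelow B (M + 1) ⊆ range M := by
  intro v hv
  obtain ⟨x, hx, rfl⟩ := mem_image.1 hv
  obtain ⟨hxM, hxB⟩ := mem_filter.1 hx
  have hxM : x < M := lt_of_le_of_ne (Nat.lt_succ_iff.1 (mem_range.1 hxM))
    fun h => hxB (h ▸ hB.1)
  have hBne : B.Nonempty := ⟨M, hB.1⟩
  have hmax : (insert x B).max' (insert_nonempty x B) = M := by
    rw [max'_insert x B hBne, (isGreatest_max' B hBne).unique hB, max_eq_right hxM.le]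
  have hcard : 2 ≤ #(insert x B) := by
    rw [card_insert_of_notMem hxB]
    exact Nat.succ_le_succ (card_pos.2 hBne)
  have := grundy_add_card_le (insert_nonempty x B)
  rw [hmax] at this
  exact mem_range.2 (by omega)

theorem exists_grundy_insert_add_eq (hB : IsGreatest (B : Set ℕ) M) {A : ℕ} (hMA : M < A) :
    ∃ n : ℕ, 0 < n ∧ n ≤ A ∧ ∀ i : ℕ, grundy (insert (A + n + i) B) = A + i := by
  set T := grundyValuesBelow B (M + 1)
  have hT : T ⊆ range M := grundyValuesBelow_subset_range hB
  have hcard : #T ≤ M := by simpa using card_le_card hT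
  refine ⟨M + 1 - #T, by omega, by omega, fun i => ?_⟩
  have hlt : ∀ b ∈ B, b < M + 1 + (A - #T + i) := fun b hb => by have := hB.2 hb; omega
  have hpos : A + (M + 1 - #T) + i = M + 1 + (A - #T + i) := by omega
  rw [hpos, grundy_insert_eq_mex hlt, grundyValuesBelow_add hB,
    iterate_insertMex_eq_range hT (by omega), mex_range]
  omega

end LastCoin

lemma isGreatest_erase_of_succ_eq {k : ℕ} {a : Fin k → ℕ} (ha : StrictMono a) {i j : Fin k}
    (hij : i.val + 1 = j.val) (hj : j.val + 1 = k) :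
    IsGreatest ((image a univ).erase (a j) : Set ℕ) (a i) := by
  refine ⟨mem_erase.2 ⟨(ha (Fin.lt_def.2 (by omega))).ne, mem_image_of_mem a (mem_univ _)⟩, ?_⟩
  rintro b hb
  obtain ⟨hbj, hb⟩ := mem_erase.1 hb
  obtain ⟨l, -, rfl⟩ := mem_image.1 hb
  have hl : l.val ≠ j.val := fun h => hbj (congrArg a (Fin.ext h))
  exact ha.monotone (Fin.le_def.2 (by omega))

/-- additive periodicity: there is 0 < n ≤ a_k with
G(a_1,...,a_{k-1}, a_k + n + i) = a_k + i for all i ≥ 0. -/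
theorem maxWelter_additive_periodicity (k : ℕ) (hk : 2 ≤ k) (a : Fin k → ℕ)
    (ha : StrictMono a) :
    ∃ n : ℕ, 0 < n ∧ n ≤ a ⟨k - 1, by omega⟩ ∧ ∀ i : ℕ,
      grundy (insert (a ⟨k - 1, by omega⟩ + n + i)
        ((Finset.image a Finset.univ).erase (a ⟨k - 1, by omega⟩))) =
      a ⟨k - 1, by omega⟩ + i := by
  have hlast : IsGreatest ((image a univ).erase (a ⟨k - 1, by omega⟩) : Set ℕ)
      (a ⟨k - 2, by omega⟩) :=
    isGreatest_erase_of_succ_eq ha (by simp only; omega) (by simp only; omega)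
  exact exists_grundy_insert_add_eq hlast (ha (Fin.mk_lt_mk.2 (by omega)))
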